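/- Intuitionistic-to-classical translation of proofs: if the labeled sequent R, Γ ⊢ w : A is derivable in the refined labeled calculus L*_Σ(𝒜), then the classical labeled sequent R ⊢ ¬Γ, w : A (where ¬Γ negates every labeled formula of Γ, and each formula of L_Σ is read as a formula of the classical language L^C_Σ via ⊥ := p∧¬p and B⊃C := ¬B∨C) is derivable in the refined labeled calculus L^C_Σ(𝒜) for the corresponding classical grammar logic. -/

import Mathlib

namespace IGL

/-- An alphabet Σ: a nonempty countable type of characters partitioned into a
forward part and a backward part by an involutive converse operation. -/
structure Alphabet where
  Char : Type
  nonempty : Nonempty Char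
  countable : Countable Char
  fwd : Char → Prop
  conv : Char → Char
  conv_conv : ∀ x, conv (conv x) = x
  fwd_iff : ∀ x, fwd x ↔ ¬ fwd (conv x)

/-- Formulae of the intuitionistic multi-modal language `L_Σ`. -/
inductive Formula (C : Type) : Type
  | atom : ℕ → Formula C
  | bot  : Formula C
  | or   : Formula C → Formula C → Formula C
  | and  : Formula C → Formula C → Formula C
  | imp  : Formula C → Formula C → Formula C
  | dia  : C → Formula C → Formula C
  | box  : C → Formula C → Formula C

namespace Formula
/-- Intuitionistic negation `¬A := A ⊃ ⊥`. -/
def neg {C : Type} (A : Formula C) : Formula C := A.imp Formula.bot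
/-- `A ≡ B := (A ⊃ B) ∧ (B ⊃ A)`. -/
def equiv {C : Type} (A B : Formula C) : Formula C := (A.imp B).and (B.imp A)
end Formula

/-- Bi-relational Σ-models. -/
structure BiModel (α : Alphabet) where
  W : Type
  nonempty : Nonempty W
  le : W → W → Prop
  le_refl : ∀ w, le w w
  le_trans : ∀ w u v, le w u → le u v → le w v
  R : α.Char → W → W → Prop
  F1 : ∀ x w v v', R x w v → le v v' → ∃ w', le w w' ∧ R x w' v'
  F2 : ∀ x w w' v, le w w' → R x w v → ∃ v', R x w' v' ∧ le v v'
  F3 : ∀ x w u, R x w u ↔ R (α.conv x) u w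
  V : W → ℕ → Prop
  mono : ∀ w u, le w u → ∀ p, V w p → V u p

/-- Satisfaction `M,w ⊩ A`. -/
def Sat {α : Alphabet} (M : BiModel α) : M.W → Formula α.Char → Prop
  | w, Formula.atom p => M.V w p
  | _, Formula.bot => False
  | w, Formula.or A B => Sat M w A ∨ Sat M w B
  | w, Formula.and A B => Sat M w A ∧ Sat M w B
  | w, Formula.imp A B => ∀ w', M.le w w' → Sat M w' A → Sat M w' B
  | w, Formula.dia x A => ∃ v, M.R x w v ∧ Sat M v A
  | w, Formula.box x A => ∀ w' v', M.le w w' → M.R x w' v' → Sat M v' A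

/-- Axioms: seriality axioms `D_x` or intuitionistic path axioms
`(⟨x₁⟩⋯⟨xₙ⟩A ⊃ ⟨x⟩A) ∧ ([x]A ⊃ [x₁]⋯[xₙ]A)`, encoded by the character `x`
and the string `[x₁,…,xₙ]`. -/
inductive Ax (C : Type) : Type
  | ser : C → Ax C
  | ipa : C → List C → Ax C

/-- Composition of the accessibility relations along a string. -/
def BiModel.Rs {α : Alphabet} (M : BiModel α) : List α.Char → M.W → M.W → Prop
  | [], w, u => w = u
  | x :: s, w, u => ∃ v, M.R x w v ∧ M.Rs s v u

/-- The frame condition corresponding to an axiom. -/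
def SatisfiesAx {α : Alphabet} (M : BiModel α) : Ax α.Char → Prop
  | Ax.ser x => ∀ w, ∃ u, M.R x w u
  | Ax.ipa x s => ∀ w u, M.Rs s w u → M.R x w u

/-- A bi-relational (Σ,𝒜)-model. -/
def AModel {α : Alphabet} (𝒜 : Set (Ax α.Char)) (M : BiModel α) : Prop :=
  ∀ a ∈ 𝒜, SatisfiesAx M a

/-- `⟨x₁⟩⋯⟨xₙ⟩A`. -/
def dias {C : Type} : List C → Formula C → Formula C
  | [], A => A
  | x :: s, A => Formula.dia x (dias s A)

/-- `[x₁]⋯[xₙ]A`. -/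
def boxes {C : Type} : List C → Formula C → Formula C
  | [], A => A
  | x :: s, A => Formula.box x (boxes s A)

/-- The Hilbert system `H IK_m(Σ,𝒜)`. -/
inductive Hprf (α : Alphabet) (𝒜 : Set (Ax α.Char)) : Formula α.Char → Prop
  | ipl1 (A B : Formula α.Char) : Hprf α 𝒜 (A.imp (B.imp A))
  | ipl2 (A B C : Formula α.Char) : Hprf α 𝒜 ((A.imp (B.imp C)).imp ((A.imp B).imp (A.imp C)))
  | ipl3 (A B : Formula α.Char) : Hprf α 𝒜 (A.imp (A.or B))
  | ipl4 (A B : Formula α.Char) : Hprf α 𝒜 (B.imp (A.or B))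
  | ipl5 (A B C : Formula α.Char) : Hprf α 𝒜 ((A.imp C).imp ((B.imp C).imp ((A.or B).imp C)))
  | ipl6 (A B : Formula α.Char) : Hprf α 𝒜 ((A.and B).imp A)
  | ipl7 (A B : Formula α.Char) : Hprf α 𝒜 ((A.and B).imp B)
  | ipl8 (A B : Formula α.Char) : Hprf α 𝒜 (A.imp (B.imp (A.and B)))
  | ipl9 (A : Formula α.Char) : Hprf α 𝒜 (Formula.bot.imp A)
  | axK (x : α.Char) (A B : Formula α.Char) : Hprf α 𝒜 ((Formula.box x (A.imp B)).imp ((Formula.box x A).imp (Formula.box x B)))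
  | axBoxAnd (x : α.Char) (A B : Formula α.Char) : Hprf α 𝒜 ((Formula.box x (A.and B)).equiv ((Formula.box x A).and (Formula.box x B)))
  | axDiaOr (x : α.Char) (A B : Formula α.Char) : Hprf α 𝒜 ((Formula.dia x (A.or B)).equiv ((Formula.dia x A).or (Formula.dia x B)))
  | axKdia (x : α.Char) (A B : Formula α.Char) : Hprf α 𝒜 ((Formula.box x (A.imp B)).imp ((Formula.dia x A).imp (Formula.dia x B)))
  | axBoxDia (x : α.Char) (A B : Formula α.Char) : Hprf α 𝒜 (((Formula.box x A).and (Formula.dia x B)).imp (Formula.dia x (A.and B)))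
  | axNotDiaBot (x : α.Char) : Hprf α 𝒜 (Formula.dia x Formula.bot).neg
  | axConv (x : α.Char) (A : Formula α.Char) : Hprf α 𝒜 ((A.imp (Formula.box x (Formula.dia (α.conv x) A))).and
      ((Formula.dia x (Formula.box (α.conv x) A)).imp A))
  | axFS (x : α.Char) (A B : Formula α.Char) : Hprf α 𝒜 (((Formula.dia x A).imp (Formula.box x B)).imp (Formula.box x (A.imp B)))
  | axDiaImp (x : α.Char) (A B : Formula α.Char) : Hprf α 𝒜 ((Formula.dia x (A.imp B)).imp ((Formula.box x A).imp (Formula.dia x B)))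
  | axSer (x : α.Char) (A : Formula α.Char) (h : Ax.ser x ∈ 𝒜) : Hprf α 𝒜 ((Formula.box x A).imp (Formula.dia x A))
  | axIpa (x : α.Char) (s : List α.Char) (A : Formula α.Char) (h : Ax.ipa x s ∈ 𝒜) :
      Hprf α 𝒜 (((dias s A).imp (Formula.dia x A)).and ((Formula.box x A).imp (boxes s A)))
  | mp (A B : Formula α.Char) : Hprf α 𝒜 (A.imp B) → Hprf α 𝒜 A → Hprf α 𝒜 B
  | nec (x : α.Char) (A : Formula α.Char) : Hprf α 𝒜 A → Hprf α 𝒜 (Formula.box x A)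

/-- `B₁ ∧ ⋯ ∧ Bₙ` (left-nested). -/
def conjList {C : Type} : Formula C → List (Formula C) → Formula C
  | A, [] => A
  | A, B :: L => conjList (A.and B) L

/-- `𝒮 ⊢_𝒜 A`: either `A ∈ IK_m(Σ,𝒜)` or `B₁∧⋯∧Bₙ ⊃ A ∈ IK_m(Σ,𝒜)` for some
`B₁,…,Bₙ ∈ 𝒮`. -/
def HderivFrom (α : Alphabet) (𝒜 : Set (Ax α.Char)) (S : Set (Formula α.Char))
    (A : Formula α.Char) : Prop :=
  Hprf α 𝒜 A ∨ ∃ B L, B ∈ S ∧ (∀ D ∈ L, D ∈ S) ∧ Hprf α 𝒜 ((conjList B L).imp A)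

/-! ### Labeled sequents -/

/-- A relational atom `w R_x u`. -/
abbrev Rel (C : Type) := ℕ × C × ℕ
/-- A labeled formula `w : A`. -/
abbrev LF (C : Type) := ℕ × Formula C

def relLabels {C : Type} (R : Multiset (Rel C)) : Set ℕ :=
  {l | ∃ a ∈ R, a.1 = l ∨ a.2.2 = l}

def lfLabels {C : Type} (Γ : Multiset (LF C)) : Set ℕ :=
  {l | ∃ b ∈ Γ, b.1 = l}

/-- `u` is fresh with respect to the sequent `R, Γ ⊢ v : ⋯`. -/
def freshIn {C : Type} (u : ℕ) (R : Multiset (Rel C)) (Γ : Multiset (LF C)) (v : ℕ) : Prop :=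
  u ∉ relLabels R ∧ u ∉ lfLabels Γ ∧ u ≠ v

/-- `Chain s w u m`: the multiset `m` is a chain of relational atoms `w R_s u`
along the string `s` (with `w = u` and `m = 0` when `s = ε`). -/
inductive Chain {C : Type} : List C → ℕ → ℕ → Multiset (Rel C) → Prop
  | nil (w : ℕ) : Chain [] w w 0
  | cons {x : C} {s : List C} {w v u : ℕ} {m : Multiset (Rel C)} :
      Chain s v u m → Chain (x :: s) w u ((w, x, v) ::ₘ m)

/-- The labeled calculus `L_Σ(𝒜)`, height-indexed: `LD α 𝒜 n R Γ w A` states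
that the labeled sequent `R, Γ ⊢ w : A` has a proof of height at most `n`. -/
inductive LD (α : Alphabet) (𝒜 : Set (Ax α.Char)) :
    ℕ → Multiset (Rel α.Char) → Multiset (LF α.Char) → ℕ → Formula α.Char → Prop
  | id (n : ℕ) (R : Multiset (Rel α.Char)) (Γ : Multiset (LF α.Char)) (w p : ℕ) : LD α 𝒜 n R ((w, Formula.atom p) ::ₘ Γ) w (Formula.atom p)
  | botL (n : ℕ) (R : Multiset (Rel α.Char)) (Γ : Multiset (LF α.Char)) (w u : ℕ) (A : Formula α.Char) : LD α 𝒜 n R ((w, Formula.bot) ::ₘ Γ) u A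
  | orL {n : ℕ} {R : Multiset (Rel α.Char)} {Γ : Multiset (LF α.Char)} {w u : ℕ} {A B C : Formula α.Char} :
      LD α 𝒜 n R ((w, A) ::ₘ Γ) u C → LD α 𝒜 n R ((w, B) ::ₘ Γ) u C →
      LD α 𝒜 (n + 1) R ((w, A.or B) ::ₘ Γ) u C
  | orR1 {n : ℕ} {R : Multiset (Rel α.Char)} {Γ : Multiset (LF α.Char)} {w : ℕ} {A B : Formula α.Char} : LD α 𝒜 n R Γ w A → LD α 𝒜 (n + 1) R Γ w (A.or B)
  | orR2 {n : ℕ} {R : Multiset (Rel α.Char)} {Γ : Multiset (LF α.Char)} {w : ℕ} {A B : Formula α.Char} : LD α 𝒜 n R Γ w B → LD α 𝒜 (n + 1) R Γ w (A.or B)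
  | andL {n : ℕ} {R : Multiset (Rel α.Char)} {Γ : Multiset (LF α.Char)} {w u : ℕ} {A B C : Formula α.Char} :
      LD α 𝒜 n R ((w, A) ::ₘ (w, B) ::ₘ Γ) u C →
      LD α 𝒜 (n + 1) R ((w, A.and B) ::ₘ Γ) u C
  | andR {n : ℕ} {R : Multiset (Rel α.Char)} {Γ : Multiset (LF α.Char)} {w : ℕ} {A B : Formula α.Char} :
      LD α 𝒜 n R Γ w A → LD α 𝒜 n R Γ w B → LD α 𝒜 (n + 1) R Γ w (A.and B)
  | impL {n : ℕ} {R : Multiset (Rel α.Char)} {Γ : Multiset (LF α.Char)} {w u : ℕ} {A B C : Formula α.Char} :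
      LD α 𝒜 n R ((w, A.imp B) ::ₘ Γ) w A → LD α 𝒜 n R ((w, B) ::ₘ Γ) u C →
      LD α 𝒜 (n + 1) R ((w, A.imp B) ::ₘ Γ) u C
  | impR {n : ℕ} {R : Multiset (Rel α.Char)} {Γ : Multiset (LF α.Char)} {w : ℕ} {A B : Formula α.Char} :
      LD α 𝒜 n R ((w, A) ::ₘ Γ) w B → LD α 𝒜 (n + 1) R Γ w (A.imp B)
  | diaL {n : ℕ} {R : Multiset (Rel α.Char)} {Γ : Multiset (LF α.Char)} {w u v : ℕ} {x : α.Char} {A B : Formula α.Char} (hf : freshIn u R ((w, Formula.dia x A) ::ₘ Γ) v) :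
      LD α 𝒜 n ((w, x, u) ::ₘ R) ((u, A) ::ₘ Γ) v B →
      LD α 𝒜 (n + 1) R ((w, Formula.dia x A) ::ₘ Γ) v B
  | diaR {n : ℕ} {R : Multiset (Rel α.Char)} {Γ : Multiset (LF α.Char)} {w u : ℕ} {x : α.Char} {A : Formula α.Char} :
      LD α 𝒜 n ((w, x, u) ::ₘ R) Γ u A →
      LD α 𝒜 (n + 1) ((w, x, u) ::ₘ R) Γ w (Formula.dia x A)
  | boxR {n : ℕ} {R : Multiset (Rel α.Char)} {Γ : Multiset (LF α.Char)} {w u : ℕ} {x : α.Char} {A : Formula α.Char} (hf : freshIn u R Γ w) :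
      LD α 𝒜 n ((w, x, u) ::ₘ R) Γ u A → LD α 𝒜 (n + 1) R Γ w (Formula.box x A)
  | boxL {n : ℕ} {R : Multiset (Rel α.Char)} {Γ : Multiset (LF α.Char)} {w u v : ℕ} {x : α.Char} {A C : Formula α.Char} :
      LD α 𝒜 n ((w, x, u) ::ₘ R) ((w, Formula.box x A) ::ₘ (u, A) ::ₘ Γ) v C →
      LD α 𝒜 (n + 1) ((w, x, u) ::ₘ R) ((w, Formula.box x A) ::ₘ Γ) v C
  | dx {n : ℕ} {R : Multiset (Rel α.Char)} {Γ : Multiset (LF α.Char)} {u v : ℕ} {x : α.Char} {A : Formula α.Char} (w : ℕ) (hax : Ax.ser x ∈ 𝒜) (hf : freshIn u R Γ v) :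
      LD α 𝒜 n ((w, x, u) ::ₘ R) Γ v A → LD α 𝒜 (n + 1) R Γ v A
  | isx {n : ℕ} {R : Multiset (Rel α.Char)} {Γ : Multiset (LF α.Char)} {w u v : ℕ} {s : List α.Char} {x : α.Char} {m : Multiset (Rel α.Char)} {A : Formula α.Char} (hax : Ax.ipa x s ∈ 𝒜) (hc : Chain s w u m) :
      LD α 𝒜 n ((w, x, u) ::ₘ (m + R)) Γ v A → LD α 𝒜 (n + 1) (m + R) Γ v A
  | cx {n : ℕ} {R : Multiset (Rel α.Char)} {Γ : Multiset (LF α.Char)} {w u v : ℕ} {x : α.Char} {A : Formula α.Char} :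
      LD α 𝒜 n ((w, x, u) ::ₘ (u, α.conv x, w) ::ₘ R) Γ v A →
      LD α 𝒜 (n + 1) ((w, x, u) ::ₘ R) Γ v A

/-- Derivability in `L_Σ(𝒜)`. -/
def LDeriv (α : Alphabet) (𝒜 : Set (Ax α.Char)) (R : Multiset (Rel α.Char))
    (Γ : Multiset (LF α.Char)) (w : ℕ) (A : Formula α.Char) : Prop :=
  ∃ n, LD α 𝒜 n R Γ w A

/-- (Σ,𝒜)-validity of a labeled sequent. -/
def SeqValid (α : Alphabet) (𝒜 : Set (Ax α.Char)) (R : Multiset (Rel α.Char))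
    (Γ : Multiset (LF α.Char)) (w : ℕ) (A : Formula α.Char) : Prop :=
  ∀ (M : BiModel α), AModel 𝒜 M → ∀ I : ℕ → M.W,
    (∀ a ∈ R, M.R a.2.1 (I a.1) (I a.2.2)) → (∀ b ∈ Γ, Sat M (I b.1) b.2) →
      Sat M (I w) A

/-! ### Grammars and propagation -/

/-- Converse of a string: `s̄ = x̄ₙ⋯x̄₁` for `s = x₁⋯xₙ`. -/
def convStr {C : Type} (cv : C → C) (s : List C) : List C := (s.map cv).reverse

/-- The 𝒜-grammar `g(𝒜)`. -/
def Gram (α : Alphabet) (𝒜 : Set (Ax α.Char)) : Set (α.Char × List α.Char) :=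
  {p | Ax.ipa p.1 p.2 ∈ 𝒜 ∨
        ∃ x s, Ax.ipa x s ∈ 𝒜 ∧ p.1 = α.conv x ∧ p.2 = convStr α.conv s}

/-- One-step derivation between strings in a grammar. -/
def Step {C : Type} (g : Set (C × List C)) (s t : List C) : Prop :=
  ∃ s₁ s₂ x r, (x, r) ∈ g ∧ s = s₁ ++ x :: s₂ ∧ t = s₁ ++ r ++ s₂

/-- The language of the character `x` relative to a grammar. -/
def Lang {C : Type} (g : Set (C × List C)) (x : C) : Set (List C) :=
  {t | Relation.ReflTransGen (Step g) [x] t}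

/-- An edge of the propagation graph `PG(R)`. -/
def PGEdge (α : Alphabet) (R : Multiset (Rel α.Char)) (a : ℕ) (x : α.Char) (b : ℕ) : Prop :=
  (a, x, b) ∈ R ∨ (b, α.conv x, a) ∈ R

/-- `PPath α R w u s`: there is a propagation path from `w` to `u` in `PG(R)`
whose string is `s`. -/
inductive PPath (α : Alphabet) (R : Multiset (Rel α.Char)) : ℕ → ℕ → List α.Char → Prop
  | nil (w : ℕ) : PPath α R w w []
  | cons {w v u : ℕ} {x : α.Char} {s : List α.Char} :
      PGEdge α R w x v → PPath α R v u s → PPath α R w u (x :: s)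

/-- Side condition of the propagation rules: there exists a propagation path
`π(w,u)` in `PG(R)` with `s_π(w,u) ∈ L_{g(𝒜)}(x)`. -/
def CanProp (α : Alphabet) (𝒜 : Set (Ax α.Char)) (R : Multiset (Rel α.Char))
    (w u : ℕ) (x : α.Char) : Prop :=
  ∃ s, PPath α R w u s ∧ s ∈ Lang (Gram α 𝒜) x

/-- The refined labeled calculus `L*_Σ(𝒜)`, height-indexed. -/
inductive LDs (α : Alphabet) (𝒜 : Set (Ax α.Char)) :
    ℕ → Multiset (Rel α.Char) → Multiset (LF α.Char) → ℕ → Formula α.Char → Prop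
  | id (n : ℕ) (R : Multiset (Rel α.Char)) (Γ : Multiset (LF α.Char)) (w p : ℕ) : LDs α 𝒜 n R ((w, Formula.atom p) ::ₘ Γ) w (Formula.atom p)
  | botL (n : ℕ) (R : Multiset (Rel α.Char)) (Γ : Multiset (LF α.Char)) (w u : ℕ) (A : Formula α.Char) : LDs α 𝒜 n R ((w, Formula.bot) ::ₘ Γ) u A
  | orL {n : ℕ} {R : Multiset (Rel α.Char)} {Γ : Multiset (LF α.Char)} {w u : ℕ} {A B C : Formula α.Char} :
      LDs α 𝒜 n R ((w, A) ::ₘ Γ) u C → LDs α 𝒜 n R ((w, B) ::ₘ Γ) u C →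
      LDs α 𝒜 (n + 1) R ((w, A.or B) ::ₘ Γ) u C
  | orR1 {n : ℕ} {R : Multiset (Rel α.Char)} {Γ : Multiset (LF α.Char)} {w : ℕ} {A B : Formula α.Char} : LDs α 𝒜 n R Γ w A → LDs α 𝒜 (n + 1) R Γ w (A.or B)
  | orR2 {n : ℕ} {R : Multiset (Rel α.Char)} {Γ : Multiset (LF α.Char)} {w : ℕ} {A B : Formula α.Char} : LDs α 𝒜 n R Γ w B → LDs α 𝒜 (n + 1) R Γ w (A.or B)
  | andL {n : ℕ} {R : Multiset (Rel α.Char)} {Γ : Multiset (LF α.Char)} {w u : ℕ} {A B C : Formula α.Char} :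
      LDs α 𝒜 n R ((w, A) ::ₘ (w, B) ::ₘ Γ) u C →
      LDs α 𝒜 (n + 1) R ((w, A.and B) ::ₘ Γ) u C
  | andR {n : ℕ} {R : Multiset (Rel α.Char)} {Γ : Multiset (LF α.Char)} {w : ℕ} {A B : Formula α.Char} :
      LDs α 𝒜 n R Γ w A → LDs α 𝒜 n R Γ w B → LDs α 𝒜 (n + 1) R Γ w (A.and B)
  | impL {n : ℕ} {R : Multiset (Rel α.Char)} {Γ : Multiset (LF α.Char)} {w u : ℕ} {A B C : Formula α.Char} :
      LDs α 𝒜 n R ((w, A.imp B) ::ₘ Γ) w A → LDs α 𝒜 n R ((w, B) ::ₘ Γ) u C →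
      LDs α 𝒜 (n + 1) R ((w, A.imp B) ::ₘ Γ) u C
  | impR {n : ℕ} {R : Multiset (Rel α.Char)} {Γ : Multiset (LF α.Char)} {w : ℕ} {A B : Formula α.Char} :
      LDs α 𝒜 n R ((w, A) ::ₘ Γ) w B → LDs α 𝒜 (n + 1) R Γ w (A.imp B)
  | diaL {n : ℕ} {R : Multiset (Rel α.Char)} {Γ : Multiset (LF α.Char)} {w u v : ℕ} {x : α.Char} {A B : Formula α.Char} (hf : freshIn u R ((w, Formula.dia x A) ::ₘ Γ) v) :
      LDs α 𝒜 n ((w, x, u) ::ₘ R) ((u, A) ::ₘ Γ) v B →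
      LDs α 𝒜 (n + 1) R ((w, Formula.dia x A) ::ₘ Γ) v B
  | boxR {n : ℕ} {R : Multiset (Rel α.Char)} {Γ : Multiset (LF α.Char)} {w u : ℕ} {x : α.Char} {A : Formula α.Char} (hf : freshIn u R Γ w) :
      LDs α 𝒜 n ((w, x, u) ::ₘ R) Γ u A → LDs α 𝒜 (n + 1) R Γ w (Formula.box x A)
  | dx {n : ℕ} {R : Multiset (Rel α.Char)} {Γ : Multiset (LF α.Char)} {u v : ℕ} {x : α.Char} {A : Formula α.Char} (w : ℕ) (hax : Ax.ser x ∈ 𝒜) (hf : freshIn u R Γ v) :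
      LDs α 𝒜 n ((w, x, u) ::ₘ R) Γ v A → LDs α 𝒜 (n + 1) R Γ v A
  | pdia {n : ℕ} {R : Multiset (Rel α.Char)} {Γ : Multiset (LF α.Char)} {u : ℕ} {x : α.Char} {A : Formula α.Char} (w : ℕ) (h : CanProp α 𝒜 R w u x) :
      LDs α 𝒜 n R Γ u A → LDs α 𝒜 (n + 1) R Γ w (Formula.dia x A)
  | pbox {n : ℕ} {R : Multiset (Rel α.Char)} {Γ : Multiset (LF α.Char)} {w u v : ℕ} {x : α.Char} {A B : Formula α.Char} (h : CanProp α 𝒜 R w u x) :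
      LDs α 𝒜 n R ((w, Formula.box x A) ::ₘ (u, A) ::ₘ Γ) v B →
      LDs α 𝒜 (n + 1) R ((w, Formula.box x A) ::ₘ Γ) v B

/-- Derivability in `L*_Σ(𝒜)`. -/
def LDerivS (α : Alphabet) (𝒜 : Set (Ax α.Char)) (R : Multiset (Rel α.Char))
    (Γ : Multiset (LF α.Char)) (w : ℕ) (A : Formula α.Char) : Prop :=
  ∃ n, LDs α 𝒜 n R Γ w A

/-! ### Label substitutions -/

/-- `subL v u l`: replace the label `v` by `u`. -/
def subL (v u l : ℕ) : ℕ := if l = v then u else l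

def subR {C : Type} (v u : ℕ) (R : Multiset (Rel C)) : Multiset (Rel C) :=
  R.map (fun a => (subL v u a.1, a.2.1, subL v u a.2.2))

def subG {C : Type} (v u : ℕ) (Γ : Multiset (LF C)) : Multiset (LF C) :=
  Γ.map (fun b => (subL v u b.1, b.2))

/-! ### Double-negation translations -/

/-- The double-negation translation on `L_Σ`. -/
def dnt {C : Type} : Formula C → Formula C
  | Formula.atom p => ((Formula.atom p).neg).neg
  | Formula.bot => ((Formula.bot : Formula C).neg).neg
  | Formula.or A B => (((dnt A).neg).and ((dnt B).neg)).neg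
  | Formula.and A B => (dnt A).and (dnt B)
  | Formula.imp A B => (dnt A).imp (dnt B)
  | Formula.dia x A => (Formula.box x ((dnt A).neg)).neg
  | Formula.box x A => Formula.box x (dnt A)

/-! ### The classical language and calculi -/

/-- Formulae of the classical language `L^C_Σ` (negation normal form). -/
inductive CForm (C : Type) : Type
  | pos : ℕ → CForm C
  | neg : ℕ → CForm C
  | or  : CForm C → CForm C → CForm C
  | and : CForm C → CForm C → CForm C
  | dia : C → CForm C → CForm C
  | box : C → CForm C → CForm C

/-- Classical negation, recursively extended to all formulae of `L^C_Σ`. -/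
def cneg {C : Type} : CForm C → CForm C
  | CForm.pos p => CForm.neg p
  | CForm.neg p => CForm.pos p
  | CForm.or A B => CForm.and (cneg A) (cneg B)
  | CForm.and A B => CForm.or (cneg A) (cneg B)
  | CForm.dia x A => CForm.box x (cneg A)
  | CForm.box x A => CForm.dia x (cneg A)

/-- `⊥ := p ∧ ¬p` for a fixed propositional atom. -/
def cbot {C : Type} : CForm C := CForm.and (CForm.pos 0) (CForm.neg 0)

/-- `A ⊃ B := ¬A ∨ B`. -/
def cimp {C : Type} (A B : CForm C) : CForm C := CForm.or (cneg A) B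

/-- Reading a formula of `L_Σ` as a formula of `L^C_Σ`. -/
def toC {C : Type} : Formula C → CForm C
  | Formula.atom p => CForm.pos p
  | Formula.bot => cbot
  | Formula.or A B => CForm.or (toC A) (toC B)
  | Formula.and A B => CForm.and (toC A) (toC B)
  | Formula.imp A B => cimp (toC A) (toC B)
  | Formula.dia x A => CForm.dia x (toC A)
  | Formula.box x A => CForm.box x (toC A)

/-- A classical labeled formula. -/
abbrev CLF (C : Type) := ℕ × CForm C

def clfLabels {C : Type} (Γ : Multiset (CLF C)) : Set ℕ :=
  {l | ∃ b ∈ Γ, b.1 = l}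

/-- The refined labeled calculus `L^C_Σ(𝒜)` for the corresponding classical
grammar logic, operating on one-sided sequents `R ⊢ Γ`. -/
inductive CLD (α : Alphabet) (𝒜 : Set (Ax α.Char)) :
    Multiset (Rel α.Char) → Multiset (CLF α.Char) → Prop
  | id (R : Multiset (Rel α.Char)) (Γ : Multiset (CLF α.Char)) (w p : ℕ) :
      CLD α 𝒜 R ((w, CForm.pos p) ::ₘ (w, CForm.neg p) ::ₘ Γ)
  | orR {R : Multiset (Rel α.Char)} {Γ : Multiset (CLF α.Char)} {w : ℕ}
      {A B : CForm α.Char} :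
      CLD α 𝒜 R ((w, A) ::ₘ (w, B) ::ₘ Γ) → CLD α 𝒜 R ((w, CForm.or A B) ::ₘ Γ)
  | andR {R : Multiset (Rel α.Char)} {Γ : Multiset (CLF α.Char)} {w : ℕ}
      {A B : CForm α.Char} :
      CLD α 𝒜 R ((w, A) ::ₘ Γ) → CLD α 𝒜 R ((w, B) ::ₘ Γ) →
      CLD α 𝒜 R ((w, CForm.and A B) ::ₘ Γ)
  | boxR {R : Multiset (Rel α.Char)} {Γ : Multiset (CLF α.Char)} {w u : ℕ}
      {x : α.Char} {A : CForm α.Char}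
      (hf : u ∉ relLabels R ∧ u ∉ clfLabels ((w, CForm.box x A) ::ₘ Γ)) :
      CLD α 𝒜 ((w, x, u) ::ₘ R) ((u, A) ::ₘ Γ) →
      CLD α 𝒜 R ((w, CForm.box x A) ::ₘ Γ)
  | dx {R : Multiset (Rel α.Char)} {Γ : Multiset (CLF α.Char)} {u : ℕ}
      {x : α.Char} (w : ℕ) (hax : Ax.ser x ∈ 𝒜)
      (hf : u ∉ relLabels R ∧ u ∉ clfLabels Γ) :
      CLD α 𝒜 ((w, x, u) ::ₘ R) Γ → CLD α 𝒜 R Γ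
  | diaR {R : Multiset (Rel α.Char)} {Γ : Multiset (CLF α.Char)} {w u : ℕ}
      {x : α.Char} {A : CForm α.Char} (h : CanProp α 𝒜 R w u x) :
      CLD α 𝒜 R ((w, CForm.dia x A) ::ₘ (u, A) ::ₘ Γ) →
      CLD α 𝒜 R ((w, CForm.dia x A) ::ₘ Γ)

/-- `⟨x₁⟩⋯⟨xₙ⟩A` in the classical language. -/
def cdias {C : Type} : List C → CForm C → CForm C
  | [], A => A
  | x :: s, A => CForm.dia x (cdias s A)

/-- The Hilbert system for the classical grammar logic `K_m(Σ,𝒜')` corresponding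
to `IK_m(Σ,𝒜)`: seriality axioms of `𝒜` are kept and each intuitionistic path
axiom contributes the path axiom `⟨x₁⟩⋯⟨xₙ⟩A ⊃ ⟨x⟩A`. -/
inductive Kprf (α : Alphabet) (𝒜 : Set (Ax α.Char)) : CForm α.Char → Prop
  | cpl1 (A B : CForm α.Char) : Kprf α 𝒜 (cimp A (cimp B A))
  | cpl2 (A B C : CForm α.Char) :
      Kprf α 𝒜 (cimp (cimp A (cimp B C)) (cimp (cimp A B) (cimp A C)))
  | cpl3 (A B : CForm α.Char) : Kprf α 𝒜 (cimp A (CForm.or A B))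
  | cpl4 (A B : CForm α.Char) : Kprf α 𝒜 (cimp B (CForm.or A B))
  | cpl5 (A B C : CForm α.Char) :
      Kprf α 𝒜 (cimp (cimp A C) (cimp (cimp B C) (cimp (CForm.or A B) C)))
  | cpl6 (A B : CForm α.Char) : Kprf α 𝒜 (cimp (CForm.and A B) A)
  | cpl7 (A B : CForm α.Char) : Kprf α 𝒜 (cimp (CForm.and A B) B)
  | cpl8 (A B : CForm α.Char) : Kprf α 𝒜 (cimp A (cimp B (CForm.and A B)))
  | cpl9 (A : CForm α.Char) : Kprf α 𝒜 (cimp cbot A)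
  | cpl10 (A : CForm α.Char) : Kprf α 𝒜 (CForm.or A (cneg A))
  | axK (x : α.Char) (A B : CForm α.Char) :
      Kprf α 𝒜 (cimp (CForm.box x (cimp A B)) (cimp (CForm.box x A) (CForm.box x B)))
  | axConv (x : α.Char) (A : CForm α.Char) :
      Kprf α 𝒜 (cimp A (CForm.box x (CForm.dia (α.conv x) A)))
  | axSer (x : α.Char) (A : CForm α.Char) (h : Ax.ser x ∈ 𝒜) :
      Kprf α 𝒜 (cimp (CForm.box x A) (CForm.dia x A))
  | axPath (x : α.Char) (s : List α.Char) (A : CForm α.Char) (h : Ax.ipa x s ∈ 𝒜) :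
      Kprf α 𝒜 (cimp (cdias s A) (CForm.dia x A))
  | mp (A B : CForm α.Char) : Kprf α 𝒜 (cimp A B) → Kprf α 𝒜 A → Kprf α 𝒜 B
  | nec (x : α.Char) (A : CForm α.Char) : Kprf α 𝒜 A → Kprf α 𝒜 (CForm.box x A)

/-- The double-negation translation from `L^C_Σ` into `L_Σ`. -/
def dntC {C : Type} : CForm C → Formula C
  | CForm.pos p => ((Formula.atom p).neg).neg
  | CForm.neg p => (((Formula.atom p).neg).neg).neg
  | CForm.or A B => (((dntC A).neg).and ((dntC B).neg)).neg
  | CForm.and A B => (dntC A).and (dntC B)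
  | CForm.dia x A => (Formula.box x ((dntC A).neg)).neg
  | CForm.box x A => Formula.box x (dntC A)

/-! ### Labeled tree sequents and derivation trees -/

/-- Reachability along the relational atoms of `R`. -/
def Reach {C : Type} (R : Multiset (Rel C)) (a b : ℕ) : Prop :=
  Relation.ReflTransGen (fun p q => ∃ x, (p, x, q) ∈ R) a b

/-- `R, Γ ⊢ w : ⋯` is a labeled tree sequent with root `r`. -/
def isTreeSeqRoot (α : Alphabet) (R : Multiset (Rel α.Char))
    (Γ : Multiset (LF α.Char)) (w r : ℕ) : Prop :=
  (R = 0 → r = w ∧ ∀ b ∈ Γ, b.1 = w) ∧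
  (R ≠ 0 →
    (∀ a ∈ R, a.2.2 ≠ r) ∧
    (∀ l : ℕ, l ≠ r → (R.filter (fun a => a.2.2 = l)).card ≤ 1) ∧
    (∀ l ∈ relLabels R, Reach R r l) ∧
    (∀ b ∈ Γ, b.1 ∈ relLabels R) ∧ w ∈ relLabels R)

/-- Proof trees (derivations) in the refined labeled calculus `L*_Σ(𝒜)`. -/
inductive DTree (α : Alphabet) (𝒜 : Set (Ax α.Char)) :
    Multiset (Rel α.Char) → Multiset (LF α.Char) → ℕ → Formula α.Char → Type
  | id (R : Multiset (Rel α.Char)) (Γ : Multiset (LF α.Char)) (w p : ℕ) :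
      DTree α 𝒜 R ((w, Formula.atom p) ::ₘ Γ) w (Formula.atom p)
  | botL (R : Multiset (Rel α.Char)) (Γ : Multiset (LF α.Char)) (w u : ℕ)
      (A : Formula α.Char) : DTree α 𝒜 R ((w, Formula.bot) ::ₘ Γ) u A
  | orL (R : Multiset (Rel α.Char)) (Γ : Multiset (LF α.Char)) (w u : ℕ)
      (A B C : Formula α.Char) :
      DTree α 𝒜 R ((w, A) ::ₘ Γ) u C → DTree α 𝒜 R ((w, B) ::ₘ Γ) u C →
      DTree α 𝒜 R ((w, A.or B) ::ₘ Γ) u C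
  | orR1 (R : Multiset (Rel α.Char)) (Γ : Multiset (LF α.Char)) (w : ℕ)
      (A B : Formula α.Char) : DTree α 𝒜 R Γ w A → DTree α 𝒜 R Γ w (A.or B)
  | orR2 (R : Multiset (Rel α.Char)) (Γ : Multiset (LF α.Char)) (w : ℕ)
      (A B : Formula α.Char) : DTree α 𝒜 R Γ w B → DTree α 𝒜 R Γ w (A.or B)
  | andL (R : Multiset (Rel α.Char)) (Γ : Multiset (LF α.Char)) (w u : ℕ)
      (A B C : Formula α.Char) :
      DTree α 𝒜 R ((w, A) ::ₘ (w, B) ::ₘ Γ) u C →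
      DTree α 𝒜 R ((w, A.and B) ::ₘ Γ) u C
  | andR (R : Multiset (Rel α.Char)) (Γ : Multiset (LF α.Char)) (w : ℕ)
      (A B : Formula α.Char) :
      DTree α 𝒜 R Γ w A → DTree α 𝒜 R Γ w B → DTree α 𝒜 R Γ w (A.and B)
  | impL (R : Multiset (Rel α.Char)) (Γ : Multiset (LF α.Char)) (w u : ℕ)
      (A B C : Formula α.Char) :
      DTree α 𝒜 R ((w, A.imp B) ::ₘ Γ) w A → DTree α 𝒜 R ((w, B) ::ₘ Γ) u C →
      DTree α 𝒜 R ((w, A.imp B) ::ₘ Γ) u C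
  | impR (R : Multiset (Rel α.Char)) (Γ : Multiset (LF α.Char)) (w : ℕ)
      (A B : Formula α.Char) :
      DTree α 𝒜 R ((w, A) ::ₘ Γ) w B → DTree α 𝒜 R Γ w (A.imp B)
  | diaL (R : Multiset (Rel α.Char)) (Γ : Multiset (LF α.Char)) (w u v : ℕ)
      (x : α.Char) (A B : Formula α.Char)
      (hf : freshIn u R ((w, Formula.dia x A) ::ₘ Γ) v) :
      DTree α 𝒜 ((w, x, u) ::ₘ R) ((u, A) ::ₘ Γ) v B →
      DTree α 𝒜 R ((w, Formula.dia x A) ::ₘ Γ) v B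
  | boxR (R : Multiset (Rel α.Char)) (Γ : Multiset (LF α.Char)) (w u : ℕ)
      (x : α.Char) (A : Formula α.Char) (hf : freshIn u R Γ w) :
      DTree α 𝒜 ((w, x, u) ::ₘ R) Γ u A → DTree α 𝒜 R Γ w (Formula.box x A)
  | dx (R : Multiset (Rel α.Char)) (Γ : Multiset (LF α.Char)) (w u v : ℕ)
      (x : α.Char) (A : Formula α.Char) (hax : Ax.ser x ∈ 𝒜)
      (hf : freshIn u R Γ v) :
      DTree α 𝒜 ((w, x, u) ::ₘ R) Γ v A → DTree α 𝒜 R Γ v A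
  | pdia (R : Multiset (Rel α.Char)) (Γ : Multiset (LF α.Char)) (w u : ℕ)
      (x : α.Char) (A : Formula α.Char) (h : CanProp α 𝒜 R w u x) :
      DTree α 𝒜 R Γ u A → DTree α 𝒜 R Γ w (Formula.dia x A)
  | pbox (R : Multiset (Rel α.Char)) (Γ : Multiset (LF α.Char)) (w u v : ℕ)
      (x : α.Char) (A B : Formula α.Char) (h : CanProp α 𝒜 R w u x) :
      DTree α 𝒜 R ((w, Formula.box x A) ::ₘ (u, A) ::ₘ Γ) v B →
      DTree α 𝒜 R ((w, Formula.box x A) ::ₘ Γ) v B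

/-- `EverySeq P d`: every labeled sequent occurring in the derivation `d`
satisfies `P`. -/
def EverySeq {α : Alphabet} {𝒜 : Set (Ax α.Char)}
    (P : Multiset (Rel α.Char) → Multiset (LF α.Char) → ℕ → Formula α.Char → Prop) :
    ∀ {R : Multiset (Rel α.Char)} {Γ : Multiset (LF α.Char)} {w : ℕ}
      {A : Formula α.Char}, DTree α 𝒜 R Γ w A → Prop
  | _, _, _, _, DTree.id R Γ w p => P R ((w, Formula.atom p) ::ₘ Γ) w (Formula.atom p)
  | _, _, _, _, DTree.botL R Γ w u A => P R ((w, Formula.bot) ::ₘ Γ) u A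
  | _, _, _, _, DTree.orL R Γ w u A B C d1 d2 =>
      P R ((w, A.or B) ::ₘ Γ) u C ∧ EverySeq P d1 ∧ EverySeq P d2
  | _, _, _, _, DTree.orR1 R Γ w A B d => P R Γ w (A.or B) ∧ EverySeq P d
  | _, _, _, _, DTree.orR2 R Γ w A B d => P R Γ w (A.or B) ∧ EverySeq P d
  | _, _, _, _, DTree.andL R Γ w u A B C d =>
      P R ((w, A.and B) ::ₘ Γ) u C ∧ EverySeq P d
  | _, _, _, _, DTree.andR R Γ w A B d1 d2 =>
      P R Γ w (A.and B) ∧ EverySeq P d1 ∧ EverySeq P d2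
  | _, _, _, _, DTree.impL R Γ w u A B C d1 d2 =>
      P R ((w, A.imp B) ::ₘ Γ) u C ∧ EverySeq P d1 ∧ EverySeq P d2
  | _, _, _, _, DTree.impR R Γ w A B d => P R Γ w (A.imp B) ∧ EverySeq P d
  | _, _, _, _, DTree.diaL R Γ w u v x A B _ d =>
      P R ((w, Formula.dia x A) ::ₘ Γ) v B ∧ EverySeq P d
  | _, _, _, _, DTree.boxR R Γ w u x A _ d =>
      P R Γ w (Formula.box x A) ∧ EverySeq P d
  | _, _, _, _, DTree.dx R Γ w u v x A _ _ d => P R Γ v A ∧ EverySeq P d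
  | _, _, _, _, DTree.pdia R Γ w u x A _ d =>
      P R Γ w (Formula.dia x A) ∧ EverySeq P d
  | _, _, _, _, DTree.pbox R Γ w u v x A B _ d =>
      P R ((w, Formula.box x A) ::ₘ Γ) v B ∧ EverySeq P d

/-!
Translate derivations rule by rule. A right rule of `L*_Σ(𝒜)` on `w : B` becomes the classical
rule for `w : B`, a left rule on `w : B` the classical rule for `w : ¬B`, using
`¬(B ∨ C) = ¬B ∧ ¬C`, `¬(B ⊃ C) = B ∧ ¬C`, `¬⟨x⟩B = [x]¬B`, `¬[x]B = ⟨x⟩¬B`; the propagation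
conditions are literally the same in both calculi. The translated premises generally lack side
formulas of the classical premises, and `(⊃_l)` keeps its principal formula where the classical
`∧`-rule consumes it, so weakening and contraction must be admissible in `L^C_Σ(𝒜)`. Both follow
from closure of derivability under passing to a setwise larger sequent, proved by induction on
the height using admissibility of arbitrary relabelings and height-preserving invertibility of
the `∨`, `∧` and `[x]` rules.
-/

section Labels

variable {C : Type}

@[simp]
theorem mem_relLabels_cons {a b l : ℕ} {x : C} {R : Multiset (Rel C)} :
    l ∈ relLabels ((a, x, b) ::ₘ R) ↔ l = a ∨ l = b ∨ l ∈ relLabels R := by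
  simp only [relLabels, Set.mem_ofPred_eq, Multiset.mem_cons]
  aesop

@[simp]
theorem mem_clfLabels_cons {w l : ℕ} {A : CForm C} {Γ : Multiset (CLF C)} :
    l ∈ clfLabels ((w, A) ::ₘ Γ) ↔ l = w ∨ l ∈ clfLabels Γ := by
  simp only [clfLabels, Set.mem_ofPred_eq, Multiset.mem_cons]
  aesop

theorem exists_fresh (R : Multiset (Rel C)) (Γ : Multiset (CLF C)) :
    ∃ u, u ∉ relLabels R ∧ u ∉ clfLabels Γ := by
  have hR : (relLabels R).Finite :=
    (Multiset.finite_toSet (R.map Prod.fst + R.map (·.2.2))).subset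
      (by
        rintro l ⟨a, ha, rfl | rfl⟩
        exacts [Multiset.mem_add.2 (.inl (Multiset.mem_map_of_mem _ ha)),
          Multiset.mem_add.2 (.inr (Multiset.mem_map_of_mem _ ha))])
  have hΓ : (clfLabels Γ).Finite :=
    (Multiset.finite_toSet (Γ.map Prod.fst)).subset
      (by rintro l ⟨b, hb, rfl⟩; exact Multiset.mem_map_of_mem _ hb)
  obtain ⟨u, hu⟩ := (hR.union hΓ).exists_notMem
  exact ⟨u, not_or.1 hu⟩

def relabelRel (σ : ℕ → ℕ) (r : Rel C) : Rel C := (σ r.1, r.2.1, σ r.2.2)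

def relabelCLF (σ : ℕ → ℕ) (b : CLF C) : CLF C := (σ b.1, b.2)

@[simp]
theorem relabelRel_mk (σ : ℕ → ℕ) (a : ℕ) (x : C) (b : ℕ) :
    relabelRel σ (a, x, b) = (σ a, x, σ b) := rfl

@[simp]
theorem relabelCLF_mk (σ : ℕ → ℕ) (w : ℕ) (A : CForm C) :
    relabelCLF σ (w, A) = (σ w, A) := rfl

theorem map_relabelRel_congr {σ τ : ℕ → ℕ} {R : Multiset (Rel C)}
    (h : ∀ l ∈ relLabels R, σ l = τ l) : R.map (relabelRel σ) = R.map (relabelRel τ) :=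
  Multiset.map_congr rfl fun a ha => by
    simp only [relabelRel, h a.1 ⟨a, ha, Or.inl rfl⟩, h a.2.2 ⟨a, ha, Or.inr rfl⟩]

theorem map_relabelCLF_congr {σ τ : ℕ → ℕ} {Γ : Multiset (CLF C)}
    (h : ∀ l ∈ clfLabels Γ, σ l = τ l) : Γ.map (relabelCLF σ) = Γ.map (relabelCLF τ) :=
  Multiset.map_congr rfl fun b hb => by simp only [relabelCLF, h b.1 ⟨b, hb, rfl⟩]

theorem map_relabelRel_update {σ : ℕ → ℕ} {u v : ℕ} {R : Multiset (Rel C)}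
    (h : u ∉ relLabels R) :
    R.map (relabelRel (Function.update σ u v)) = R.map (relabelRel σ) :=
  map_relabelRel_congr fun _ hl => Function.update_of_ne (ne_of_mem_of_not_mem hl h) _ _

theorem map_relabelCLF_update {σ : ℕ → ℕ} {u v : ℕ} {Γ : Multiset (CLF C)}
    (h : u ∉ clfLabels Γ) :
    Γ.map (relabelCLF (Function.update σ u v)) = Γ.map (relabelCLF σ) :=
  map_relabelCLF_congr fun _ hl => Function.update_of_ne (ne_of_mem_of_not_mem hl h) _ _

@[simp]
theorem map_relabelRel_id (R : Multiset (Rel C)) : R.map (relabelRel id) = R :=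
  Multiset.map_id' R

@[simp]
theorem map_relabelCLF_id (Γ : Multiset (CLF C)) : Γ.map (relabelCLF id) = Γ :=
  Multiset.map_id' Γ

end Labels

theorem literals_mem_of_cons_eq {C : Type} {c : CLF C} {Γ Δ : Multiset (CLF C)} {v p : ℕ}
    (e : c ::ₘ Γ = (v, .pos p) ::ₘ (v, .neg p) ::ₘ Δ) (hpos : c ≠ (v, .pos p))
    (hneg : c ≠ (v, .neg p)) : (v, .pos p) ∈ Γ ∧ (v, .neg p) ∈ Γ := by
  have hmem : ∀ d, d ∈ (v, .pos p) ::ₘ (v, .neg p) ::ₘ Δ → d ≠ c → d ∈ Γ := fun d hd hdc => by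
    rw [← e] at hd
    exact (Multiset.mem_cons.1 hd).resolve_left hdc
  exact ⟨hmem _ (by simp) hpos.symm, hmem _ (by simp) hneg.symm⟩

theorem exists_cons_of_cons_eq_cons {γ : Type} {a b : γ} {s t : Multiset γ}
    (e : a ::ₘ s = b ::ₘ t) (hab : a ≠ b) : ∃ cs, s = b ::ₘ cs ∧ t = a ::ₘ cs := by
  obtain ⟨-, cs, hs, ht⟩ := (Multiset.cons_eq_cons.1 e).resolve_left (fun h => hab h.1)
  exact ⟨cs, hs, ht⟩

section Propagation

variable {α : Alphabet} {𝒜 : Set (Ax α.Char)} {R R' : Multiset (Rel α.Char)}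

theorem PPath.mono (hR : R ⊆ R') {a b : ℕ} {s : List α.Char} (h : PPath α R a b s) :
    PPath α R' a b s := by
  induction h with
  | nil w => exact .nil w
  | cons he _ ih => exact .cons (he.imp (@hR _) (@hR _)) ih

theorem PPath.relabel (σ : ℕ → ℕ) {a b : ℕ} {s : List α.Char} (h : PPath α R a b s) :
    PPath α (R.map (relabelRel σ)) (σ a) (σ b) s := by
  induction h with
  | nil w => exact .nil (σ w)
  | cons he _ ih =>
    exact .cons (he.imp (Multiset.mem_map_of_mem _) (Multiset.mem_map_of_mem _)) ih

theorem CanProp.mono (hR : R ⊆ R') {w u : ℕ} {x : α.Char} (h : CanProp α 𝒜 R w u x) :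
    CanProp α 𝒜 R' w u x :=
  h.imp fun _ hs => ⟨hs.1.mono hR, hs.2⟩

theorem CanProp.relabel (σ : ℕ → ℕ) {w u : ℕ} {x : α.Char} (h : CanProp α 𝒜 R w u x) :
    CanProp α 𝒜 (R.map (relabelRel σ)) (σ w) (σ u) x :=
  h.imp fun _ hs => ⟨hs.1.relabel σ, hs.2⟩

end Propagation

section Calculus

variable {α : Alphabet} {𝒜 : Set (Ax α.Char)}

/-- `CLDh α 𝒜 n R Γ`: the sequent `R ⊢ Γ` has a derivation of height at most `n`. -/
inductive CLDh (α : Alphabet) (𝒜 : Set (Ax α.Char)) :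
    ℕ → Multiset (Rel α.Char) → Multiset (CLF α.Char) → Prop
  | id (n : ℕ) (R : Multiset (Rel α.Char)) (Γ : Multiset (CLF α.Char)) (w p : ℕ) :
      CLDh α 𝒜 n R ((w, CForm.pos p) ::ₘ (w, CForm.neg p) ::ₘ Γ)
  | orR {n : ℕ} {R : Multiset (Rel α.Char)} {Γ : Multiset (CLF α.Char)} {w : ℕ}
      {A B : CForm α.Char} :
      CLDh α 𝒜 n R ((w, A) ::ₘ (w, B) ::ₘ Γ) →
      CLDh α 𝒜 (n + 1) R ((w, CForm.or A B) ::ₘ Γ)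
  | andR {n : ℕ} {R : Multiset (Rel α.Char)} {Γ : Multiset (CLF α.Char)} {w : ℕ}
      {A B : CForm α.Char} :
      CLDh α 𝒜 n R ((w, A) ::ₘ Γ) → CLDh α 𝒜 n R ((w, B) ::ₘ Γ) →
      CLDh α 𝒜 (n + 1) R ((w, CForm.and A B) ::ₘ Γ)
  | boxR {n : ℕ} {R : Multiset (Rel α.Char)} {Γ : Multiset (CLF α.Char)} {w u : ℕ}
      {x : α.Char} {A : CForm α.Char}
      (hf : u ∉ relLabels R ∧ u ∉ clfLabels ((w, CForm.box x A) ::ₘ Γ)) :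
      CLDh α 𝒜 n ((w, x, u) ::ₘ R) ((u, A) ::ₘ Γ) →
      CLDh α 𝒜 (n + 1) R ((w, CForm.box x A) ::ₘ Γ)
  | dx {n : ℕ} {R : Multiset (Rel α.Char)} {Γ : Multiset (CLF α.Char)} {u : ℕ}
      {x : α.Char} (w : ℕ) (hax : Ax.ser x ∈ 𝒜)
      (hf : u ∉ relLabels R ∧ u ∉ clfLabels Γ) :
      CLDh α 𝒜 n ((w, x, u) ::ₘ R) Γ → CLDh α 𝒜 (n + 1) R Γ
  | diaR {n : ℕ} {R : Multiset (Rel α.Char)} {Γ : Multiset (CLF α.Char)} {w u : ℕ}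
      {x : α.Char} {A : CForm α.Char} (h : CanProp α 𝒜 R w u x) :
      CLDh α 𝒜 n R ((w, CForm.dia x A) ::ₘ (u, A) ::ₘ Γ) →
      CLDh α 𝒜 (n + 1) R ((w, CForm.dia x A) ::ₘ Γ)

namespace CLDh

variable {n : ℕ} {R : Multiset (Rel α.Char)} {Γ : Multiset (CLF α.Char)}

theorem toCLD (h : CLDh α 𝒜 n R Γ) : CLD α 𝒜 R Γ := by
  induction h with
  | id => exact .id _ _ _ _
  | orR _ ih => exact .orR ih
  | andR _ _ ih₁ ih₂ => exact .andR ih₁ ih₂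
  | boxR hf _ ih => exact .boxR hf ih
  | dx w hax hf _ ih => exact .dx w hax hf ih
  | diaR hp _ ih => exact .diaR hp ih

theorem succ (h : CLDh α 𝒜 n R Γ) : CLDh α 𝒜 (n + 1) R Γ := by
  induction h with
  | id => exact .id _ _ _ _ _
  | orR _ ih => exact .orR ih
  | andR _ _ ih₁ ih₂ => exact .andR ih₁ ih₂
  | boxR hf _ ih => exact .boxR hf ih
  | dx w hax hf _ ih => exact .dx w hax hf ih
  | diaR hp _ ih => exact .diaR hp ih

theorem of_le {m : ℕ} (hnm : n ≤ m) (h : CLDh α 𝒜 n R Γ) : CLDh α 𝒜 m R Γ := by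
  induction hnm with
  | refl => exact h
  | step _ ih => exact ih.succ

theorem of_mem {w p : ℕ} (hpos : (w, CForm.pos p) ∈ Γ) (hneg : (w, CForm.neg p) ∈ Γ) :
    CLDh α 𝒜 n R Γ := by
  obtain ⟨Γ₁, rfl⟩ := Multiset.exists_cons_of_mem hpos
  obtain ⟨Γ₂, rfl⟩ :=
    Multiset.exists_cons_of_mem ((Multiset.mem_cons.1 hneg).resolve_left (by simp))
  exact .id _ _ _ _ _

theorem relabel (h : CLDh α 𝒜 n R Γ) (σ : ℕ → ℕ) :
    CLDh α 𝒜 n (R.map (relabelRel σ)) (Γ.map (relabelCLF σ)) := by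
  induction h generalizing σ with
  | id => simpa using .id _ _ _ _ _
  | orR _ ih => simpa using .orR (by simpa using ih σ)
  | andR _ _ ih₁ ih₂ => simpa using .andR (by simpa using ih₁ σ) (by simpa using ih₂ σ)
  | diaR hp _ ih => simpa using .diaR (hp.relabel σ) (by simpa using ih σ)
  | @boxR n R Γ w u x A hf _ ih =>
    obtain ⟨u', hu'R, hu'Γ⟩ := exists_fresh (R.map (relabelRel σ))
      (((w, CForm.box x A) ::ₘ Γ).map (relabelCLF σ))
    have hwu : w ≠ u := fun e => hf.2 (by simp [e])
    have := ih (Function.update σ u u')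
    rw [Multiset.map_cons, Multiset.map_cons, map_relabelRel_update hf.1,
      map_relabelCLF_update (fun h' => hf.2 (by simp [h']))] at this
    simp only [Multiset.map_cons, relabelCLF_mk, relabelRel_mk, Function.update_self,
      Function.update_of_ne hwu] at hu'Γ this ⊢
    exact .boxR ⟨hu'R, hu'Γ⟩ this
  | @dx n R Γ u x w hax hf _ ih =>
    obtain ⟨u', hu'R, hu'Γ⟩ := exists_fresh (R.map (relabelRel σ)) (Γ.map (relabelCLF σ))
    have := ih (Function.update σ u u')
    rw [Multiset.map_cons, map_relabelRel_update hf.1, map_relabelCLF_update hf.2] at this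
    simp only [relabelRel_mk, Function.update_self] at this
    exact .dx _ hax ⟨hu'R, hu'Γ⟩ this

theorem rename_fresh {w v : ℕ} {x : α.Char} {A : CForm α.Char}
    (h : CLDh α 𝒜 n ((w, x, v) ::ₘ R) ((v, A) ::ₘ Γ)) (hvR : v ∉ relLabels R)
    (hvΓ : v ∉ clfLabels Γ) (hvw : v ≠ w) (u : ℕ) :
    CLDh α 𝒜 n ((w, x, u) ::ₘ R) ((u, A) ::ₘ Γ) := by
  have := h.relabel (Function.update _root_.id v u)
  simp only [Multiset.map_cons, relabelRel_mk, relabelCLF_mk, map_relabelRel_update hvR,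
    map_relabelCLF_update hvΓ, map_relabelRel_id, map_relabelCLF_id, Function.update_self,
    Function.update_of_ne hvw.symm, id_eq] at this
  exact this

theorem invert_or {w : ℕ} {X Y : CForm α.Char} (h : CLDh α 𝒜 n R ((w, .or X Y) ::ₘ Γ)) :
    CLDh α 𝒜 n R ((w, X) ::ₘ (w, Y) ::ₘ Γ) := by
  generalize e : (w, CForm.or X Y) ::ₘ Γ = Δ at h
  induction h generalizing Γ with
  | id _ _ _ v p =>
    obtain ⟨h₁, h₂⟩ := literals_mem_of_cons_eq e (by simp) (by simp)
    exact of_mem (w := v) (p := p) (by simp [h₁]) (by simp [h₂])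
  | @orR m R Γ₀ w₀ A B h ih =>
    rcases Multiset.cons_eq_cons.1 e with ⟨he, rfl⟩ | ⟨-, cs, rfl, rfl⟩
    · cases he
      exact h.succ
    · have := ih (Γ := (w₀, A) ::ₘ (w₀, B) ::ₘ cs) (by simp only [Multiset.cons_swap])
      rw [Multiset.cons_swap (w, Y), Multiset.cons_swap (w, X)]
      exact orR (by simpa only [Multiset.cons_swap] using this)
  | @andR m R Γ₀ w₀ A B _ _ ih₁ ih₂ =>
    obtain ⟨cs, rfl, rfl⟩ := exists_cons_of_cons_eq_cons e (by simp)
    have h₁' := ih₁ (Γ := (w₀, A) ::ₘ cs) (by simp only [Multiset.cons_swap])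
    have h₂' := ih₂ (Γ := (w₀, B) ::ₘ cs) (by simp only [Multiset.cons_swap])
    rw [Multiset.cons_swap (w, Y), Multiset.cons_swap (w, X)]
    exact andR (by simpa only [Multiset.cons_swap] using h₁')
      (by simpa only [Multiset.cons_swap] using h₂')
  | @boxR m R Γ₀ w₀ u x A hf _ ih =>
    obtain ⟨cs, rfl, rfl⟩ := exists_cons_of_cons_eq_cons e (by simp)
    have := ih (Γ := (u, A) ::ₘ cs) (by simp only [Multiset.cons_swap])
    rw [Multiset.cons_swap (w, Y), Multiset.cons_swap (w, X)]
    exact boxR ⟨hf.1, by simpa using hf.2⟩ (by simpa only [Multiset.cons_swap] using this)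
  | dx w₀ hax hf _ ih =>
    subst e
    exact dx w₀ hax ⟨hf.1, by simpa using hf.2⟩ (ih rfl)
  | @diaR m R Γ₀ w₀ u x A hp _ ih =>
    obtain ⟨cs, rfl, rfl⟩ := exists_cons_of_cons_eq_cons e (by simp)
    have := ih (Γ := (w₀, .dia x A) ::ₘ (u, A) ::ₘ cs) (by simp only [Multiset.cons_swap])
    rw [Multiset.cons_swap (w, Y), Multiset.cons_swap (w, X)]
    exact diaR hp (by simpa only [Multiset.cons_swap] using this)

theorem invert_and {w : ℕ} {X Y Z : CForm α.Char} (h : CLDh α 𝒜 n R ((w, .and X Y) ::ₘ Γ))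
    (hZ : Z = X ∨ Z = Y) : CLDh α 𝒜 n R ((w, Z) ::ₘ Γ) := by
  generalize e : (w, CForm.and X Y) ::ₘ Γ = Δ at h
  induction h generalizing Γ with
  | id _ _ _ v p =>
    obtain ⟨h₁, h₂⟩ := literals_mem_of_cons_eq e (by simp) (by simp)
    exact of_mem (w := v) (p := p) (by simp [h₁]) (by simp [h₂])
  | @orR m R Γ₀ w₀ A B _ ih =>
    obtain ⟨cs, rfl, rfl⟩ := exists_cons_of_cons_eq_cons e (by simp)
    have := ih (Γ := (w₀, A) ::ₘ (w₀, B) ::ₘ cs) (by simp only [Multiset.cons_swap])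
    rw [Multiset.cons_swap (w, Z)]
    exact orR (by simpa only [Multiset.cons_swap] using this)
  | @andR m R Γ₀ w₀ A B h₁ h₂ ih₁ ih₂ =>
    rcases Multiset.cons_eq_cons.1 e with ⟨he, rfl⟩ | ⟨-, cs, rfl, rfl⟩
    · cases he
      rcases hZ with rfl | rfl
      exacts [h₁.succ, h₂.succ]
    · have h₁' := ih₁ (Γ := (w₀, A) ::ₘ cs) (by simp only [Multiset.cons_swap])
      have h₂' := ih₂ (Γ := (w₀, B) ::ₘ cs) (by simp only [Multiset.cons_swap])
      rw [Multiset.cons_swap (w, Z)]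
      exact andR (by simpa only [Multiset.cons_swap] using h₁')
        (by simpa only [Multiset.cons_swap] using h₂')
  | @boxR m R Γ₀ w₀ u x A hf _ ih =>
    obtain ⟨cs, rfl, rfl⟩ := exists_cons_of_cons_eq_cons e (by simp)
    have := ih (Γ := (u, A) ::ₘ cs) (by simp only [Multiset.cons_swap])
    rw [Multiset.cons_swap (w, Z)]
    exact boxR ⟨hf.1, by simpa using hf.2⟩ (by simpa only [Multiset.cons_swap] using this)
  | dx w₀ hax hf _ ih =>
    subst e
    exact dx w₀ hax ⟨hf.1, by simpa using hf.2⟩ (ih rfl)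
  | @diaR m R Γ₀ w₀ u x A hp _ ih =>
    obtain ⟨cs, rfl, rfl⟩ := exists_cons_of_cons_eq_cons e (by simp)
    have := ih (Γ := (w₀, .dia x A) ::ₘ (u, A) ::ₘ cs) (by simp only [Multiset.cons_swap])
    rw [Multiset.cons_swap (w, Z)]
    exact diaR hp (by simpa only [Multiset.cons_swap] using this)

/-- The label `u` is arbitrary: the derivation is built with a fresh label, which is then
renamed to `u` by `rename_fresh`. -/
theorem invert_box {w : ℕ} {x : α.Char} {A : CForm α.Char}
    (h : CLDh α 𝒜 n R ((w, .box x A) ::ₘ Γ)) (u : ℕ) :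
    CLDh α 𝒜 n ((w, x, u) ::ₘ R) ((u, A) ::ₘ Γ) := by
  generalize e : (w, CForm.box x A) ::ₘ Γ = Δ at h
  induction h generalizing Γ u with
  | id _ _ _ v p =>
    obtain ⟨h₁, h₂⟩ := literals_mem_of_cons_eq e (by simp) (by simp)
    exact of_mem (w := v) (p := p) (by simp [h₁]) (by simp [h₂])
  | @orR m R Γ₀ w₀ A₀ B₀ _ ih =>
    obtain ⟨cs, rfl, rfl⟩ := exists_cons_of_cons_eq_cons e (by simp)
    have := ih (Γ := (w₀, A₀) ::ₘ (w₀, B₀) ::ₘ cs) u (by simp only [Multiset.cons_swap])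
    rw [Multiset.cons_swap (u, A)]
    exact orR (by simpa only [Multiset.cons_swap] using this)
  | @andR m R Γ₀ w₀ A₀ B₀ _ _ ih₁ ih₂ =>
    obtain ⟨cs, rfl, rfl⟩ := exists_cons_of_cons_eq_cons e (by simp)
    have h₁' := ih₁ (Γ := (w₀, A₀) ::ₘ cs) u (by simp only [Multiset.cons_swap])
    have h₂' := ih₂ (Γ := (w₀, B₀) ::ₘ cs) u (by simp only [Multiset.cons_swap])
    rw [Multiset.cons_swap (u, A)]
    exact andR (by simpa only [Multiset.cons_swap] using h₁')
      (by simpa only [Multiset.cons_swap] using h₂')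
  | @diaR m R Γ₀ w₀ v x₀ A₀ hp _ ih =>
    obtain ⟨cs, rfl, rfl⟩ := exists_cons_of_cons_eq_cons e (by simp)
    have := ih (Γ := (w₀, .dia x₀ A₀) ::ₘ (v, A₀) ::ₘ cs) u (by simp only [Multiset.cons_swap])
    rw [Multiset.cons_swap (u, A)]
    exact diaR (hp.mono (Multiset.subset_cons _ _))
      (by simpa only [Multiset.cons_swap] using this)
  | @boxR m R Γ₀ w₀ v x₀ A₀ hf h ih =>
    rcases Multiset.cons_eq_cons.1 e with ⟨he, rfl⟩ | ⟨-, cs, rfl, rfl⟩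
    · cases he
      exact (h.rename_fresh hf.1 (by simp_all) (by simp_all) u).succ
    · obtain ⟨u', hu'R, hu'Γ⟩ := exists_fresh ((w₀, x₀, v) ::ₘ R)
        ((v, A₀) ::ₘ (w, .box x A) ::ₘ cs)
      simp only [mem_relLabels_cons, mem_clfLabels_cons, not_or] at hu'R hu'Γ hf
      have := ih (Γ := (v, A₀) ::ₘ cs) u' (by simp only [Multiset.cons_swap])
      have h' : CLDh α 𝒜 (m + 1) ((w, x, u') ::ₘ R) ((u', A) ::ₘ (w₀, .box x₀ A₀) ::ₘ cs) := by
        rw [Multiset.cons_swap (u', A)]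
        exact boxR (by simp; tauto) (by simpa only [Multiset.cons_swap] using this)
      exact h'.rename_fresh (by tauto) (by simp; tauto) (by tauto) u
  | @dx m R Γ₀ v x₀ w₀ hax hf _ ih =>
    subst e
    obtain ⟨u', hu'R, hu'Γ⟩ := exists_fresh ((w₀, x₀, v) ::ₘ R) ((w, .box x A) ::ₘ Γ)
    simp only [mem_relLabels_cons, mem_clfLabels_cons, not_or] at hu'R hu'Γ hf
    have := ih u' rfl
    have h' : CLDh α 𝒜 (m + 1) ((w, x, u') ::ₘ R) ((u', A) ::ₘ Γ) :=
      dx w₀ hax (by simp; tauto) (by simpa only [Multiset.cons_swap] using this)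
    exact h'.rename_fresh (by tauto) (by tauto) (by tauto) u

/-- Weakening and contraction at once. A principal formula that also occurs in the context is
contracted by inverting it in the premise and applying the induction hypothesis a second time
at the same height. -/
theorem mono {R' : Multiset (Rel α.Char)} {Γ' : Multiset (CLF α.Char)}
    (h : CLDh α 𝒜 n R Γ) (hR : R ⊆ R') (hΓ : Γ ⊆ Γ') : CLDh α 𝒜 n R' Γ' := by
  induction n using Nat.strong_induction_on generalizing R Γ R' Γ' with
  | _ n ih =>
  cases h with
  | id _ _ _ w p => exact of_mem (w := w) (p := p) (hΓ (by simp)) (hΓ (by simp))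
  | @orR m _ Γ₀ w A B h =>
    obtain ⟨Γ'', rfl⟩ := Multiset.exists_cons_of_mem (hΓ (Multiset.mem_cons_self _ _))
    have h₁ := ih m (by omega) h hR (Γ' := (w, .or A B) ::ₘ (w, A) ::ₘ (w, B) ::ₘ Γ'')
      (by intro z; have := @hΓ z; simp only [Multiset.mem_cons] at *; tauto)
    refine orR (ih m (by omega) h₁.invert_or (Multiset.Subset.refl _) ?_)
    intro z; simp only [Multiset.mem_cons]; tauto
  | @andR m _ Γ₀ w A B h₁ h₂ =>
    obtain ⟨Γ'', rfl⟩ := Multiset.exists_cons_of_mem (hΓ (Multiset.mem_cons_self _ _))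
    have h₁' := ih m (by omega) h₁ hR (Γ' := (w, .and A B) ::ₘ (w, A) ::ₘ Γ'')
      (by intro z; have := @hΓ z; simp only [Multiset.mem_cons] at *; tauto)
    have h₂' := ih m (by omega) h₂ hR (Γ' := (w, .and A B) ::ₘ (w, B) ::ₘ Γ'')
      (by intro z; have := @hΓ z; simp only [Multiset.mem_cons] at *; tauto)
    refine andR (ih m (by omega) (h₁'.invert_and (.inl rfl)) (Multiset.Subset.refl _) ?_)
      (ih m (by omega) (h₂'.invert_and (.inr rfl)) (Multiset.Subset.refl _) ?_) <;>
    · intro z; simp only [Multiset.mem_cons]; tauto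
  | @diaR m _ Γ₀ w u x A hp h =>
    obtain ⟨Γ'', rfl⟩ := Multiset.exists_cons_of_mem (hΓ (Multiset.mem_cons_self _ _))
    refine diaR (hp.mono hR) (ih m (by omega) h hR ?_)
    intro z; have := @hΓ z; simp only [Multiset.mem_cons] at *; tauto
  | @boxR m _ Γ₀ w u x A hf h =>
    obtain ⟨Γ'', rfl⟩ := Multiset.exists_cons_of_mem (hΓ (Multiset.mem_cons_self _ _))
    obtain ⟨u', hu'R, hu'Γ⟩ := exists_fresh R' ((w, .box x A) ::ₘ Γ'')
    simp only [mem_clfLabels_cons, not_or] at hf hu'Γ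
    have h₁ := ih m (by omega) (h.rename_fresh hf.1 hf.2.2 hf.2.1 u')
      (R' := (w, x, u') ::ₘ R') (Γ' := (w, .box x A) ::ₘ (u', A) ::ₘ Γ'')
      (Multiset.cons_subset_cons hR)
      (by intro z; have := @hΓ z; simp only [Multiset.mem_cons] at *; tauto)
    have h₂ := ih m (by omega) (h₁.invert_box u') (R' := (w, x, u') ::ₘ R')
      (Γ' := (u', A) ::ₘ Γ'')
      (by intro z; simp only [Multiset.mem_cons]; tauto)
      (by intro z; simp only [Multiset.mem_cons]; tauto)
    exact boxR ⟨hu'R, by simp [hu'Γ.1, hu'Γ.2]⟩ h₂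
  | @dx m _ _ u x w hax hf h =>
    obtain ⟨u', hu'R, hu'Γ⟩ := exists_fresh R' Γ'
    have := h.relabel (Function.update _root_.id u u')
    simp only [Multiset.map_cons, relabelRel_mk, map_relabelRel_update hf.1,
      map_relabelCLF_update hf.2, map_relabelRel_id, map_relabelCLF_id,
      Function.update_self] at this
    exact dx _ hax ⟨hu'R, hu'Γ⟩ (ih m (by omega) this (Multiset.cons_subset_cons hR) hΓ)

end CLDh

namespace CLD

variable {R : Multiset (Rel α.Char)} {Γ Γ' : Multiset (CLF α.Char)}

theorem exists_height (h : CLD α 𝒜 R Γ) : ∃ n, CLDh α 𝒜 n R Γ := by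
  induction h with
  | id => exact ⟨0, .id _ _ _ _ _⟩
  | orR _ ih => obtain ⟨n, h⟩ := ih; exact ⟨n + 1, .orR h⟩
  | andR _ _ ih₁ ih₂ =>
    obtain ⟨n₁, h₁⟩ := ih₁
    obtain ⟨n₂, h₂⟩ := ih₂
    exact ⟨max n₁ n₂ + 1, .andR (h₁.of_le (le_max_left _ _)) (h₂.of_le (le_max_right _ _))⟩
  | boxR hf _ ih => obtain ⟨n, h⟩ := ih; exact ⟨n + 1, .boxR hf h⟩
  | dx w hax hf _ ih => obtain ⟨n, h⟩ := ih; exact ⟨n + 1, .dx w hax hf h⟩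
  | diaR hp _ ih => obtain ⟨n, h⟩ := ih; exact ⟨n + 1, .diaR hp h⟩

theorem weaken (h : CLD α 𝒜 R Γ) (hΓ : Γ ⊆ Γ') : CLD α 𝒜 R Γ' :=
  let ⟨_, h⟩ := h.exists_height
  (h.mono (Multiset.Subset.refl R) hΓ).toCLD

theorem of_mem {w p : ℕ} (hpos : (w, CForm.pos p) ∈ Γ) (hneg : (w, CForm.neg p) ∈ Γ) :
    CLD α 𝒜 R Γ :=
  (CLDh.of_mem (n := 0) hpos hneg).toCLD

theorem orR_of_mem {w : ℕ} {A B : CForm α.Char} (hmem : (w, A.or B) ∈ Γ)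
    (h : CLD α 𝒜 R ((w, A) ::ₘ (w, B) ::ₘ Γ)) : CLD α 𝒜 R Γ :=
  h.orR.weaken (Multiset.cons_subset.2 ⟨hmem, Multiset.Subset.refl Γ⟩)

theorem andR_of_mem {w : ℕ} {A B : CForm α.Char} (hmem : (w, A.and B) ∈ Γ)
    (hA : CLD α 𝒜 R ((w, A) ::ₘ Γ)) (hB : CLD α 𝒜 R ((w, B) ::ₘ Γ)) : CLD α 𝒜 R Γ :=
  (hA.andR hB).weaken (Multiset.cons_subset.2 ⟨hmem, Multiset.Subset.refl Γ⟩)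

theorem boxR_of_mem {w u : ℕ} {x : α.Char} {A : CForm α.Char} (hmem : (w, A.box x) ∈ Γ)
    (huR : u ∉ relLabels R) (huΓ : u ∉ clfLabels Γ)
    (h : CLD α 𝒜 ((w, x, u) ::ₘ R) ((u, A) ::ₘ Γ)) : CLD α 𝒜 R Γ := by
  have huw : u ≠ w := fun e => huΓ ⟨_, hmem, e.symm⟩
  exact (h.boxR ⟨huR, by simp [huw, huΓ]⟩).weaken
    (Multiset.cons_subset.2 ⟨hmem, Multiset.Subset.refl Γ⟩)

theorem diaR_of_mem {w u : ℕ} {x : α.Char} {A : CForm α.Char} (hmem : (w, A.dia x) ∈ Γ)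
    (hp : CanProp α 𝒜 R w u x) (h : CLD α 𝒜 R ((u, A) ::ₘ Γ)) : CLD α 𝒜 R Γ :=
  (CLD.diaR hp (h.weaken (Multiset.subset_cons _ _))).weaken
    (Multiset.cons_subset.2 ⟨hmem, Multiset.Subset.refl Γ⟩)

end CLD

/-- `w : A ↦ w : ¬A`, so that `Γ.map negLF` is the paper's `¬Γ`. -/
def negLF {C : Type} (b : LF C) : CLF C := (b.1, cneg (toC b.2))

@[simp]
theorem cneg_cneg {C : Type} (A : CForm C) : cneg (cneg A) = A := by
  induction A <;> simp_all [cneg]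

theorem freshIn.notMem_clfLabels {C : Type} {u v : ℕ} {R : Multiset (Rel C)}
    {Γ : Multiset (LF C)} (hf : freshIn u R Γ v) (X : CForm C) :
    u ∉ clfLabels ((v, X) ::ₘ Γ.map negLF) := by
  rintro ⟨b, hb, rfl⟩
  rcases Multiset.mem_cons.1 hb with rfl | hb
  · exact hf.2.2 rfl
  · obtain ⟨a, ha, rfl⟩ := Multiset.mem_map.1 hb
    exact hf.2.1 ⟨a, ha, rfl⟩

theorem LDs.toCLD {n : ℕ} {R : Multiset (Rel α.Char)} {Γ : Multiset (LF α.Char)} {v : ℕ}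
    {A : Formula α.Char} (h : LDs α 𝒜 n R Γ v A) :
    CLD α 𝒜 R ((v, toC A) ::ₘ Γ.map negLF) := by
  induction h with
  | id _ _ _ w p =>
    exact .of_mem (w := w) (p := p) (by simp [negLF, toC]) (by simp [negLF, toC, cneg])
  | botL _ _ _ w =>
    refine .orR_of_mem (w := w) (A := .neg 0) (B := .pos 0) (by simp [negLF, toC, cbot, cneg]) ?_
    exact .of_mem (w := w) (p := 0) (by simp) (by simp)
  | @orL _ _ _ w _ A B _ _ _ ih₁ ih₂ =>
    refine .andR_of_mem (w := w) (A := cneg (toC A)) (B := cneg (toC B))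
      (by simp [negLF, toC, cneg]) (ih₁.weaken ?_) (ih₂.weaken ?_) <;>
    · intro z; simp only [Multiset.map_cons, negLF, Multiset.mem_cons]; tauto
  | @orR1 _ _ _ w A B _ ih =>
    refine .orR_of_mem (w := w) (A := toC A) (B := toC B) (by simp [toC]) (ih.weaken ?_)
    intro z; simp only [negLF, Multiset.mem_cons]; tauto
  | @orR2 _ _ _ w A B _ ih =>
    refine .orR_of_mem (w := w) (A := toC A) (B := toC B) (by simp [toC]) (ih.weaken ?_)
    intro z; simp only [negLF, Multiset.mem_cons]; tauto
  | @andL _ _ _ w _ A B _ _ ih =>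
    refine .orR_of_mem (w := w) (A := cneg (toC A)) (B := cneg (toC B))
      (by simp [negLF, toC, cneg]) (ih.weaken ?_)
    intro z; simp only [Multiset.map_cons, negLF, Multiset.mem_cons]; tauto
  | @andR _ _ _ w A B _ _ ih₁ ih₂ =>
    refine .andR_of_mem (w := w) (A := toC A) (B := toC B) (by simp [toC])
      (ih₁.weaken ?_) (ih₂.weaken ?_) <;>
    · intro z; simp only [negLF, Multiset.mem_cons]; tauto
  | @impL _ _ _ w _ A B _ _ _ ih₁ ih₂ =>
    refine .andR_of_mem (w := w) (A := toC A) (B := cneg (toC B))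
      (by simp [negLF, toC, cimp, cneg]) (ih₁.weaken ?_) (ih₂.weaken ?_) <;>
    · intro z; simp only [Multiset.map_cons, negLF, Multiset.mem_cons]; tauto
  | @impR _ _ _ w A B _ ih =>
    refine .orR_of_mem (w := w) (A := cneg (toC A)) (B := toC B) (by simp [toC, cimp])
      (ih.weaken ?_)
    intro z; simp only [Multiset.map_cons, negLF, Multiset.mem_cons]; tauto
  | @diaL _ _ _ w u _ x A _ hf _ ih =>
    refine .boxR_of_mem (w := w) (x := x) (A := cneg (toC A)) (by simp [negLF, toC, cneg])
      hf.1 (hf.notMem_clfLabels _) (ih.weaken ?_)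
    intro z; simp only [Multiset.map_cons, negLF, Multiset.mem_cons]; tauto
  | @boxR _ _ _ w _ x A hf _ ih =>
    refine .boxR_of_mem (w := w) (x := x) (A := toC A) (by simp [toC])
      hf.1 (hf.notMem_clfLabels _) (ih.weaken ?_)
    intro z; simp only [negLF, Multiset.mem_cons]; tauto
  | dx w hax hf _ ih => exact .dx w hax ⟨hf.1, hf.notMem_clfLabels _⟩ ih
  | @pdia _ _ _ _ x A w hp _ ih =>
    refine .diaR_of_mem (w := w) (x := x) (A := toC A) (by simp [toC]) hp (ih.weaken ?_)
    intro z; simp only [negLF, Multiset.mem_cons]; tauto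
  | @pbox _ _ _ w _ _ x A _ hp _ ih =>
    refine .diaR_of_mem (w := w) (x := x) (A := cneg (toC A)) (by simp [negLF, toC, cneg])
      hp (ih.weaken ?_)
    intro z; simp only [Multiset.map_cons, negLF, Multiset.mem_cons]; tauto

end Calculus

/-- **Intuitionistic-to-classical translation of proofs**: if `R, Γ ⊢ w : A` is
derivable in `L*_Σ(𝒜)`, then `R ⊢ ¬Γ, w : A` is derivable in the refined
labeled calculus `L^C_Σ(𝒜)` for the corresponding classical grammar logic. -/
theorem int_to_classical (α : Alphabet) (𝒜 : Set (Ax α.Char))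
    (R : Multiset (Rel α.Char)) (Γ : Multiset (LF α.Char)) (w : ℕ)
    (A : Formula α.Char) (h : LDerivS α 𝒜 R Γ w A) :
    CLD α 𝒜 R ((w, toC A) ::ₘ Γ.map (fun b => (b.1, cneg (toC b.2)))) :=
  let ⟨_, h⟩ := h
  h.toCLD

end IGL
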